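/- Let E_4 be the two-dimensional complex evolution algebra with structural matrix ((0,1),(0,0)) (i.e. e₁e₁ = e₂, e₂e₂ = 0). A linear map P : ℂ² → ℂ² is a Rota–Baxter operator of weight 0 on E_4 if and only if its matrix is of the form ((0, b),(0, d)) for some b, d ∈ ℂ, or of the form ((a, b),(0, a/2)) for some a, b ∈ ℂ. -/

import Mathlib

/-- The evolution-algebra product on `ℂ²` determined by a structural matrix `A`:
`e_i · e_i = a_{i1} e₁ + a_{i2} e₂` and `e₁ · e₂ = e₂ · e₁ = 0`. -/
noncomputable def evMulC (A : Matrix (Fin 2) (Fin 2) ℂ) (x y : Fin 2 → ℂ) : Fin 2 → ℂ :=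
  fun k => x 0 * y 0 * A 0 k + x 1 * y 1 * A 1 k

/-- `P` is a Rota–Baxter operator of weight `lam` on the evolution algebra with structural
matrix `A`: `P(x)·P(y) = P(x·P(y) + P(x)·y + lam x·y)` for all `x, y`. -/
def IsRotaBaxter (A : Matrix (Fin 2) (Fin 2) ℂ) (lam : ℂ)
    (P : (Fin 2 → ℂ) →ₗ[ℂ] (Fin 2 → ℂ)) : Prop :=
  ∀ x y : Fin 2 → ℂ,
    evMulC A (P x) (P y) = P (evMulC A x (P y) + evMulC A (P x) y + lam • evMulC A x y)

/-! On `E₄` the product is `x · y = x₀ y₀ e₂`, so with `P e₁ = (a, b)`, `P e₂ = (c, d)` the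
weight-0 Rota–Baxter identity reads `(Px)₀ (Py)₀ e₂ = (x₀ (Py)₀ + (Px)₀ y₀) P e₂`.
At `x = y = e₂` it forces `c² = 0`, and at `x = y = e₁` then `a² = 2ad`; conversely, once
`c = 0` both sides are `x₀ y₀` times the corresponding sides of `a² e₂ = 2a P e₂`. -/

theorem LinearMap.apply_eq_fin_two {R M : Type*} [CommSemiring R] [AddCommMonoid M] [Module R M]
    (P : (Fin 2 → R) →ₗ[R] M) (x : Fin 2 → R) :
    P x = x 0 • P ![1, 0] + x 1 • P ![0, 1] := by
  have hx : x = x 0 • ![1, 0] + x 1 • ![0, 1] := by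
    funext i; fin_cases i <;> simp
  conv_lhs => rw [hx]
  simp only [map_add, map_smul]

theorem evMulC_E4 (x y : Fin 2 → ℂ) :
    evMulC !![0, 1; 0, 0] x y = (x 0 * y 0) • (![0, 1] : Fin 2 → ℂ) := by
  funext k; fin_cases k <;> simp [evMulC]

theorem isRotaBaxter_E4_zero_iff (P : (Fin 2 → ℂ) →ₗ[ℂ] (Fin 2 → ℂ)) :
    IsRotaBaxter !![0, 1; 0, 0] 0 P ↔
      P ![0, 1] 0 = 0 ∧ P ![1, 0] 0 * (P ![1, 0] 0 - 2 * P ![0, 1] 1) = 0 := by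
  simp only [IsRotaBaxter, evMulC_E4, zero_smul, add_zero, ← add_smul, map_smul]
  have hP := P.apply_eq_fin_two
  generalize P ![1, 0] = v at hP ⊢
  generalize P ![0, 1] = u at hP ⊢
  have hP0 : ∀ x, P x 0 = x 0 * v 0 + x 1 * u 0 := by simp [hP]
  constructor
  · intro h
    have hu : u 0 = 0 := by
      simpa [hP0] using congrFun (h ![0, 1] ![0, 1]) 1
    have hv : v 0 * v 0 = (v 0 + v 0) * u 1 := by
      simpa [hP0, hu] using congrFun (h ![1, 0] ![1, 0]) 1
    exact ⟨hu, by linear_combination hv⟩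
  · rintro ⟨hu, hv⟩ x y
    have key : x 0 * v 0 * (y 0 * v 0) = (x 0 * (y 0 * v 0) + x 0 * v 0 * y 0) * u 1 := by
      linear_combination x 0 * y 0 * hv
    funext k
    fin_cases k
    · simp [hu]
    · simpa [hP0, hu] using key

theorem entry_equations_iff_matrix_forms (v u : Fin 2 → ℂ) :
    u 0 = 0 ∧ v 0 * (v 0 - 2 * u 1) = 0 ↔
      (∃ b d : ℂ, v = ![0, b] ∧ u = ![0, d]) ∨ (∃ a b : ℂ, v = ![a, b] ∧ u = ![0, a / 2]) := by
  constructor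
  · rintro ⟨hu, hv⟩
    have hv' : v = ![v 0, v 1] := by funext i; fin_cases i <;> rfl
    rcases mul_eq_zero.1 hv with hv0 | hu1
    · refine .inl ⟨v 1, u 1, by rwa [hv0] at hv', ?_⟩
      funext i; fin_cases i <;> simp [hu]
    · have hd : u 1 = v 0 / 2 := by linear_combination -hu1 / 2
      refine .inr ⟨v 0, v 1, hv', ?_⟩
      funext i; fin_cases i <;> simp [hu, hd]
  · rintro (⟨b, d, rfl, rfl⟩ | ⟨a, b, rfl, rfl⟩)
    · simp
    · refine ⟨rfl, ?_⟩
      simp only [Matrix.cons_val_zero, Matrix.cons_val_one]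
      ring

/-- Rota–Baxter operators of weight 0 on `E₄` (`e₁e₁ = e₂`) are exactly those
with matrix `((0,b),(0,d))` or `((a,b),(0,a/2))`. -/
theorem rb_weight0_E4 (P : (Fin 2 → ℂ) →ₗ[ℂ] (Fin 2 → ℂ)) :
    IsRotaBaxter !![0, 1; 0, 0] 0 P ↔
      (∃ b d : ℂ, P ![1, 0] = ![0, b] ∧ P ![0, 1] = ![0, d]) ∨
      (∃ a b : ℂ, P ![1, 0] = ![a, b] ∧ P ![0, 1] = ![0, a / 2]) :=
  (isRotaBaxter_E4_zero_iff P).trans (entry_equations_iff_matrix_forms _ _)
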